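/- Let G be a countable discrete abelian group, let X be an ergodic G-system, and let U be a compact connected metrizable abelian group acting on X by measure-preserving transformations (V_u)_{u∈U} commuting with the G-action, such that (u, x) ↦ V_u x is jointly measurable. Let d ≥ 1 and let P : G × X → S¹ be a phase polynomial of degree < d such that for every g ∈ G the function P(g, ·) takes only finitely many values (modulo null sets). Then P is invariant under the action of U: for every u ∈ U and g ∈ G, P(g, V_u x) = P(g, x) for μ-a.e. x. -/

import Mathlib

open MeasureTheory
open scoped symmDiff

noncomputable instance : MeasurableSpace Circle := borel Circle
instance : BorelSpace Circle := ⟨rfl⟩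

/-- `φ : X → H` is a phase polynomial of degree `< k` with respect to the action `T` of `G`
on the measure space `(X, μ)`: all `k`-fold multiplicative derivatives
`Δ_{h₁} ⋯ Δ_{h_k} φ` equal `1` almost everywhere, where `Δ_g φ = (φ ∘ T_g) · φ⁻¹`. -/
def PhasePoly {G X H : Type*} [MeasurableSpace X] [CommGroup H]
    (T : G → X → X) (μ : Measure X) : ℕ → (X → H) → Prop
  | 0, φ => ∀ᵐ x ∂μ, φ x = 1
  | (k + 1), φ => ∀ g : G, PhasePoly T μ k (fun x => φ (T g x) * (φ x)⁻¹)

/-- The action `T` of `G` on `(X, μ)` is ergodic: every measurable set that is invariant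
modulo null sets under every `T g` has measure `0` or `1`. -/
def IsErgodicAction {G X : Type*} [MeasurableSpace X] (T : G → X → X)
    (μ : Measure X) : Prop :=
  ∀ A : Set X, MeasurableSet A → (∀ g : G, μ ((T g ⁻¹' A) ∆ A) = 0) → μ A = 0 ∨ μ A = 1

/-!
Induct on the degree `d`. If every derivative `Δ_g φ` is invariant under `V`, then
`Q_u = (φ ∘ V_u) · φ⁻¹` is `T`-invariant and countably valued, hence a.e. equal to a constant
`c u` by ergodicity. The cocycle identity `Q_{uv} = (Q_u ∘ V_v) · Q_v` makes `c` a homomorphism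
with countable range, and joint measurability of the action makes its fibres measurable. One
fibre then has positive Haar measure, so by Steinhaus `ker c` is a neighbourhood of `1`, hence an
open subgroup, hence all of the connected group `U`.
-/

open scoped Pointwise

theorem MonoidHom.eq_one_of_countable_range {U H : Type*} [Group U] [TopologicalSpace U]
    [IsTopologicalGroup U] [CompactSpace U] [ConnectedSpace U] [MeasurableSpace U] [BorelSpace U]
    [Group H] (χ : U →* H) (hrange : (Set.range χ).Countable)
    (hfib : ∀ s, MeasurableSet (χ ⁻¹' {s})) : χ = 1 := by
  obtain ⟨s, -, hs⟩ : ∃ s ∈ Set.range χ, (Measure.haar : Measure U) (χ ⁻¹' {s}) ≠ 0 := by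
    by_contra! h
    have hcover : ⋃ s ∈ Set.range χ, χ ⁻¹' {s} = Set.univ := by
      ext u; simp
    have := (measure_biUnion_null_iff hrange).2 h
    rw [hcover] at this
    exact ((Measure.haar : Measure U).measure_univ_pos.2 (NeZero.ne _)).ne' this
  have hsub : χ ⁻¹' {s} / χ ⁻¹' {s} ⊆ (χ.ker : Set U) := by
    rintro _ ⟨a, ha, b, hb, rfl⟩
    simp_all [MonoidHom.mem_ker]
  have hopen : IsOpen (χ.ker : Set U) := χ.ker.isOpen_of_mem_nhds <| Filter.mem_of_superset
    (Measure.div_mem_nhds_one_of_haar_pos _ _ (hfib s) (pos_iff_ne_zero.2 hs)) hsub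
  have hker : (χ.ker : Set U) = Set.univ :=
    IsClopen.eq_univ ⟨χ.ker.isClosed_of_isOpen hopen, hopen⟩ ⟨1, χ.ker.one_mem⟩
  exact MonoidHom.ker_eq_top_iff.1 (SetLike.coe_injective hker)

theorem IsErgodicAction.exists_ae_eq_const {G X Y : Type*} [MeasurableSpace X] {μ : Measure X}
    [IsProbabilityMeasure μ] [MeasurableSpace Y] [MeasurableSingletonClass Y]
    {T : G → X → X} (herg : IsErgodicAction T μ) {ψ : X → Y} (hψ : Measurable ψ)
    (hinv : ∀ g, ∀ᵐ x ∂μ, ψ (T g x) = ψ x) {S : Set Y} (hS : S.Countable)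
    (hψS : ∀ᵐ x ∂μ, ψ x ∈ S) : ∃ c, ∀ᵐ x ∂μ, ψ x = c := by
  by_contra hne
  have hlevel : ∀ s ∈ S, ∀ᵐ x ∂μ, ψ x ≠ s := by
    intro s _
    have hmeas : MeasurableSet (ψ ⁻¹' {s}) := hψ (measurableSet_singleton s)
    have hlevel_inv : ∀ g, μ ((T g ⁻¹' (ψ ⁻¹' {s})) ∆ (ψ ⁻¹' {s})) = 0 := fun g => by
      rw [measure_symmDiff_eq_zero_iff]
      filter_upwards [hinv g] with x hx
      change (ψ (T g x) = s) = (ψ x = s)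
      rw [hx]
    rcases herg _ hmeas hlevel_inv with h0 | h1
    · exact measure_eq_zero_iff_ae_notMem.1 h0
    · exact absurd
        ⟨s, (ae_iff_measure_eq hmeas.nullMeasurableSet).2 (h1.trans measure_univ.symm)⟩ hne
  obtain ⟨x, hxS, hx⟩ := (hψS.and ((ae_ball_iff hS).2 hlevel)).exists
  exact hx _ hxS rfl

theorem ae_mul_inv_mem_image2 {X H : Type*} [MeasurableSpace X] {μ : Measure X} [Group H]
    {f : X → X} (hf : Measure.QuasiMeasurePreserving f μ μ)
    {φ : X → H} {S : Set H} (hφS : ∀ᵐ x ∂μ, φ x ∈ S) :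
    ∀ᵐ x ∂μ, φ (f x) * (φ x)⁻¹ ∈ Set.image2 (fun a b => a * b⁻¹) S S := by
  filter_upwards [hf.ae hφS, hφS] with x h1 h2
  exact Set.mem_image2_of_mem h1 h2

section

variable {X U : Type*} [MeasurableSpace X] {μ : Measure X} [IsProbabilityMeasure μ]
  [Group U] [TopologicalSpace U] [IsTopologicalGroup U] [CompactSpace U]
  [ConnectedSpace U] [MeasurableSpace U] [BorelSpace U] {V : U → X → X}

theorem ae_eq_one_of_ae_const_cocycle {H : Type*} [Group H] [MeasurableSpace H]
    [MeasurableSingletonClass H] (hV : ∀ u, Measure.QuasiMeasurePreserving (V u) μ μ)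
    {Q : U → X → H} (hQ : Measurable (Function.uncurry Q))
    (hcocycle : ∀ u v, ∀ᵐ x ∂μ, Q (u * v) x = Q u (V v x) * Q v x)
    (hconst : ∀ u, ∃ c, ∀ᵐ x ∂μ, Q u x = c) {S : Set H} (hS : S.Countable)
    (hQS : ∀ u, ∀ᵐ x ∂μ, Q u x ∈ S) (u : U) : ∀ᵐ x ∂μ, Q u x = 1 := by
  choose c hc using hconst
  have hc_iff : ∀ u s, c u = s ↔ μ {x | Q u x ≠ s} = 0 := fun u s => by
    rw [← ae_iff]
    refine ⟨fun h => h ▸ hc u, fun h => (Filter.eventually_const (f := ae μ)).1 ?_⟩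
    filter_upwards [hc u, h] with x h1 h2
    rw [← h1, h2]
  let χ : U →* H := MonoidHom.mk' c fun u v => (hc_iff _ _).2 <| ae_iff.1 <| by
    filter_upwards [hcocycle u v, (hV v).ae (hc u), hc v] with x h1 h2 h3
    rw [h1, h2, h3]
  have hrange : Set.range χ ⊆ S := by
    rintro _ ⟨v, rfl⟩
    obtain ⟨x, h1, h2⟩ := ((hc v).and (hQS v)).exists
    exact (h1 ▸ h2 : c v ∈ S)
  have hfib : ∀ s, MeasurableSet (χ ⁻¹' {s}) := fun s => by
    have : χ ⁻¹' {s} = {v | μ (Prod.mk v ⁻¹' {q | Q q.1 q.2 ≠ s}) = 0} :=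
      Set.ext fun v => hc_iff v s
    rw [this]
    exact measurable_measure_prodMk_left (hQ (measurableSet_singleton s).compl)
      (measurableSet_singleton 0)
  have hχu : c u = 1 := DFunLike.congr_fun (χ.eq_one_of_countable_range (hS.mono hrange) hfib) u
  exact hχu ▸ hc u

variable {G H : Type*} [CommGroup H] [MeasurableSpace H] [MeasurableSingletonClass H]
  [MeasurableMul₂ H] [MeasurableInv H] {T : G → X → X}

theorem ae_invariant_of_derivatives_ae_invariant (herg : IsErgodicAction T μ)
    (hV : ∀ u, Measure.QuasiMeasurePreserving (V u) μ μ)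
    (hVjoint : Measurable fun q : U × X => V q.1 q.2)
    (hVmul : ∀ u v, ∀ᵐ x ∂μ, V (u * v) x = V u (V v x))
    (hVcomm : ∀ u g, ∀ᵐ x ∂μ, V u (T g x) = T g (V u x))
    {φ : X → H} (hφ : Measurable φ) {S : Set H} (hS : S.Countable) (hφS : ∀ᵐ x ∂μ, φ x ∈ S)
    (hder : ∀ g u, ∀ᵐ x ∂μ, φ (T g (V u x)) * (φ (V u x))⁻¹ = φ (T g x) * (φ x)⁻¹) (u : U) :
    ∀ᵐ x ∂μ, φ (V u x) = φ x := by
  set Q : U → X → H := fun u x => φ (V u x) * (φ x)⁻¹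
  have hQ : Measurable (Function.uncurry Q) := (hφ.comp hVjoint).mul (hφ.comp measurable_snd).inv
  have hQS : ∀ u, ∀ᵐ x ∂μ, Q u x ∈ Set.image2 (fun a b => a * b⁻¹) S S :=
    fun u => ae_mul_inv_mem_image2 (hV u) hφS
  have hQT : ∀ u g, ∀ᵐ x ∂μ, Q u (T g x) = Q u x := fun u g => by
    filter_upwards [hVcomm u g, hder g u] with x hcomm hderx
    simp only [Q, ← div_eq_mul_inv] at hderx ⊢
    rw [hcomm]
    exact div_eq_div_iff_div_eq_div.1 hderx
  have hcocycle : ∀ u v, ∀ᵐ x ∂μ, Q (u * v) x = Q u (V v x) * Q v x := fun u v => by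
    filter_upwards [hVmul u v] with x hx
    simp only [Q, hx]
    group
  have hconst : ∀ u, ∃ c, ∀ᵐ x ∂μ, Q u x = c := fun u =>
    herg.exists_ae_eq_const (hQ.comp measurable_prodMk_left) (hQT u) (hS.image2 hS _) (hQS u)
  filter_upwards [ae_eq_one_of_ae_const_cocycle hV hQ hcocycle hconst (hS.image2 hS _) hQS u]
    with x hx
  exact mul_inv_eq_one.1 hx

theorem PhasePoly.ae_invariant (hT : ∀ g, Measure.QuasiMeasurePreserving (T g) μ μ)
    (herg : IsErgodicAction T μ) (hV : ∀ u, Measure.QuasiMeasurePreserving (V u) μ μ)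
    (hVjoint : Measurable fun q : U × X => V q.1 q.2)
    (hVmul : ∀ u v, ∀ᵐ x ∂μ, V (u * v) x = V u (V v x))
    (hVcomm : ∀ u g, ∀ᵐ x ∂μ, V u (T g x) = T g (V u x))
    {d : ℕ} {φ : X → H} (hpoly : PhasePoly T μ d φ) (hφ : Measurable φ) {S : Set H}
    (hS : S.Countable) (hφS : ∀ᵐ x ∂μ, φ x ∈ S) (u : U) :
    ∀ᵐ x ∂μ, φ (V u x) = φ x := by
  induction d generalizing φ S u with
  | zero =>
    filter_upwards [hpoly, (hV u).ae hpoly] with x h1 h2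
    rw [h1, h2]
  | succ d ih =>
    refine ae_invariant_of_derivatives_ae_invariant herg hV hVjoint hVmul hVcomm hφ hS hφS
      (fun g v => ?_) u
    exact ih (hpoly g) ((hφ.comp (hT g).measurable).mul hφ.inv) (hS.image2 hS _)
      (ae_mul_inv_mem_image2 (hT g) hφS) v

end

theorem phase_polynomial_invariant_under_connected_group
    {G : Type*}
    {X : Type*} [MeasurableSpace X] (μ : Measure X) [IsProbabilityMeasure μ]
    {U : Type*} [CommGroup U] [TopologicalSpace U] [IsTopologicalGroup U]
    [CompactSpace U] [ConnectedSpace U]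
    [MeasurableSpace U] [BorelSpace U]
    (T : G → X → X)
    (hT : ∀ g, MeasurePreserving (T g) μ μ)
    (herg : IsErgodicAction T μ)
    (V : U → X → X)
    (hV : ∀ u, MeasurePreserving (V u) μ μ)
    (hVjoint : Measurable (fun q : U × X => V q.1 q.2))
    (hVmul : ∀ u v, ∀ᵐ x ∂μ, V (u * v) x = V u (V v x))
    (hVcomm : ∀ u g, ∀ᵐ x ∂μ, V u (T g x) = T g (V u x))
    (d : ℕ)
    (P : G → X → Circle)
    (hPmeas : ∀ g, Measurable (P g))
    (hPpoly : ∀ g, PhasePoly T μ d (P g))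
    (hPfin : ∀ g, ∃ S : Finset Circle, ∀ᵐ x ∂μ, P g x ∈ S) :
    ∀ (u : U) (g : G), ∀ᵐ x ∂μ, P g (V u x) = P g x := by
  intro u g
  obtain ⟨S, hS⟩ := hPfin g
  exact (hPpoly g).ae_invariant (fun g => (hT g).quasiMeasurePreserving) herg
    (fun u => (hV u).quasiMeasurePreserving) hVjoint hVmul hVcomm (hPmeas g) S.countable_toSet
    hS u
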